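/- For every integer n ≥ 1, the following identity holds in ℤ[q]: [n+1]_q · ([2n−1 choose n]_q − q · [2n−1 choose n−2]_q) = [2n choose n]_q; equivalently, the q-Catalan number satisfies C_n(q) = [2n−1 choose n]_q − q·[2n−1 choose n−2]_q. -/

import Mathlib

open Polynomial

/-- The q-integer `[n]_q = 1 + q + ⋯ + q^{n−1}` as a polynomial in `ℤ[q]`
(with `[0]_q = 0`). -/
noncomputable def qIntP (n : ℕ) : Polynomial ℤ := ∑ i ∈ Finset.range n, Polynomial.X ^ i

/-- The q-factorial `[n]_q! = [1]_q[2]_q⋯[n]_q` in `ℤ[q]`. -/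
noncomputable def qFactP (n : ℕ) : Polynomial ℤ := ∏ i ∈ Finset.range n, qIntP (i + 1)

/-- The Gaussian binomial coefficient `[m choose k]_q = [m]_q!/([k]_q![m−k]_q!)`
as a polynomial in `ℤ[q]` (the division, by a monic polynomial, is exact),
and `0` if `k > m`. -/
noncomputable def qBinomP (m k : ℕ) : Polynomial ℤ :=
  if k ≤ m then qFactP m /ₘ (qFactP k * qFactP (m - k)) else 0

/-- The Gaussian binomial coefficient `[m choose k]_{q²}`, i.e. `[m choose k]_q`
with `q` replaced by `q²`. -/
noncomputable def qBinomP2 (m k : ℕ) : Polynomial ℤ := (qBinomP m k).comp (Polynomial.X ^ 2)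

/-- The Gaussian binomial coefficient with an integer lower index, equal to `0`
for negative lower index. -/
noncomputable def qBinomZ (m : ℕ) (k : ℤ) : Polynomial ℤ :=
  if 0 ≤ k then qBinomP m k.toNat else 0

/-- The q-Catalan number `C_n(q) = (1/[n+1]_q)·[2n choose n]_q` as a polynomial
in `ℤ[q]` (the division, by a monic polynomial, is exact). -/
noncomputable def qCatalanP (n : ℕ) : Polynomial ℤ := qBinomP (2 * n) n /ₘ qIntP (n + 1)

/-!
Write `N = 2n - 1`. By symmetry `[N choose n] = [N choose n-1]`, and by absorption
`[n+1]·[N choose n-2] = [n-1]·[N choose n-1]`, so the left-hand side is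
`([n+1] - q[n-1])·[N choose n-1] = (1 + q^n)·[N choose n-1]`, which is `[2n choose n]` by the
q-Pascal rule together with symmetry once more. Symmetry, absorption and q-Pascal are proved for
the polynomials `gaussBinom` defined by the q-Pascal recursion; they satisfy
`gaussBinom (a + b) a · [a]! · [b]! = [a + b]!`, so the divisions in `qBinomP` are exact and
return them.
-/

theorem qIntP_add (a b : ℕ) : qIntP (a + b) = qIntP a + X ^ a * qIntP b := by
  simp only [qIntP, Finset.sum_range_add, Finset.mul_sum, ← pow_add]

theorem qIntP_add_two_sub_X_mul (m : ℕ) : qIntP (m + 2) - X * qIntP m = 1 + X ^ (m + 1) := by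
  have h₁ : qIntP 1 = 1 := by simp [qIntP]
  rw [show m + 2 = 1 + (m + 1) by omega, qIntP_add, qIntP_add m 1, h₁]
  ring

theorem qIntP_succ_monic (n : ℕ) : (qIntP (n + 1)).Monic :=
  monic_geom_sum_X n.succ_ne_zero

theorem qFactP_succ (n : ℕ) : qFactP (n + 1) = qFactP n * qIntP (n + 1) :=
  Finset.prod_range_succ _ n

theorem qFactP_monic (n : ℕ) : (qFactP n).Monic :=
  monic_prod_of_monic _ _ fun i _ => qIntP_succ_monic i

theorem qFactP_mul_qFactP_ne_zero (a b : ℕ) : qFactP a * qFactP b ≠ 0 :=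
  ((qFactP_monic a).mul (qFactP_monic b)).ne_zero

noncomputable def gaussBinom : ℕ → ℕ → ℤ[X]
  | _, 0 => 1
  | 0, _ + 1 => 0
  | m + 1, k + 1 => gaussBinom m (k + 1) + X ^ (m - k) * gaussBinom m k

theorem gaussBinom_eq_zero_of_lt : ∀ {m k : ℕ}, m < k → gaussBinom m k = 0
  | 0, _ + 1, _ => rfl
  | m + 1, k + 1, h => by
    rw [gaussBinom, gaussBinom_eq_zero_of_lt (by omega : m < k + 1),
      gaussBinom_eq_zero_of_lt (by omega : m < k), mul_zero, add_zero]

theorem gaussBinom_add_succ_succ (a b : ℕ) :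
    gaussBinom (a + b + 2) (a + 1) =
      gaussBinom (a + b + 1) (a + 1) + X ^ (b + 1) * gaussBinom (a + b + 1) a := by
  rw [gaussBinom, show a + b + 1 - a = b + 1 by omega]

theorem gaussBinom_self (m : ℕ) : gaussBinom m m = 1 := by
  induction m with
  | zero => rfl
  | succ m ih => rw [gaussBinom, gaussBinom_eq_zero_of_lt m.lt_succ_self, ih, Nat.sub_self]; ring

theorem gaussBinom_mul_qFactP_mul_qFactP (a b : ℕ) :
    gaussBinom (a + b) a * (qFactP a * qFactP b) = qFactP (a + b) := by
  induction a generalizing b with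
  | zero => simp [gaussBinom, qFactP]
  | succ a iha =>
    induction b with
    | zero => simp [gaussBinom_self, qFactP]
    | succ b ihb =>
      have h₁ := ihb
      have h₂ := iha (b + 1)
      rw [show a + 1 + b = a + b + 1 by omega] at h₁
      rw [show a + (b + 1) = a + b + 1 by omega] at h₂
      rw [show a + 1 + (b + 1) = a + b + 2 by omega, gaussBinom_add_succ_succ, qFactP_succ (a + b + 1),
        show a + b + 1 + 1 = (b + 1) + (a + 1) by omega, qIntP_add (b + 1) (a + 1)]
      rw [qFactP_succ a, qFactP_succ b] at *
      linear_combination qIntP (b + 1) * h₁ + X ^ (b + 1) * qIntP (a + 1) * h₂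

theorem qBinomP_eq_gaussBinom {m k : ℕ} (h : k ≤ m) : qBinomP m k = gaussBinom m k := by
  obtain ⟨b, rfl⟩ := Nat.exists_eq_add_of_le h
  rw [qBinomP, if_pos h, Nat.add_sub_cancel_left, ← gaussBinom_mul_qFactP_mul_qFactP k b,
    mul_comm (gaussBinom _ _)]
  exact mul_divByMonic_cancel_left _ ((qFactP_monic k).mul (qFactP_monic b))

theorem gaussBinom_add_comm (a b : ℕ) : gaussBinom (a + b) a = gaussBinom (a + b) b := by
  refine mul_right_cancel₀ (qFactP_mul_qFactP_ne_zero a b) ?_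
  rw [gaussBinom_mul_qFactP_mul_qFactP, mul_comm (qFactP a), add_comm a b,
    gaussBinom_mul_qFactP_mul_qFactP]

theorem gaussBinom_succ_mul_qIntP (k c : ℕ) :
    gaussBinom (k + 1 + c) (k + 1) * qIntP (k + 1) = gaussBinom (k + 1 + c) k * qIntP (c + 1) := by
  refine mul_right_cancel₀ (qFactP_mul_qFactP_ne_zero k c) ?_
  have h₁ := gaussBinom_mul_qFactP_mul_qFactP (k + 1) c
  have h₂ := gaussBinom_mul_qFactP_mul_qFactP k (c + 1)
  rw [qFactP_succ k] at h₁
  rw [qFactP_succ c, show k + (c + 1) = k + 1 + c by omega] at h₂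
  linear_combination h₁ - h₂

theorem gaussBinom_central_succ (m : ℕ) :
    gaussBinom (2 * m + 2) (m + 1) = (1 + X ^ (m + 1)) * gaussBinom (2 * m + 1) m := by
  have h := gaussBinom_add_succ_succ m m
  rw [show m + m + 1 = (m + 1) + m by omega, gaussBinom_add_comm] at h
  rw [show 2 * m + 2 = m + m + 2 by omega, h, show m + 1 + m = 2 * m + 1 by omega]
  ring

theorem qIntP_mul_qBinomZ (m : ℕ) :
    qIntP (m + 2) * qBinomZ (2 * m + 1) ((m : ℤ) - 1) = qIntP m * gaussBinom (2 * m + 1) m := by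
  rcases m with _ | k
  · simp [qBinomZ, qIntP]
  · have h := gaussBinom_succ_mul_qIntP k (k + 2)
    rw [show k + 1 + (k + 2) = 2 * (k + 1) + 1 by omega] at h
    rw [qBinomZ, if_pos (by omega), show ((k + 1 : ℕ) - 1 : ℤ).toNat = k by omega,
      qBinomP_eq_gaussBinom (by omega)]
    linear_combination -h

/-- For every `n ≥ 1`, in `ℤ[q]`:
`[n+1]_q·([2n−1 choose n]_q − q·[2n−1 choose n−2]_q) = [2n choose n]_q`;
equivalently `C_n(q) = [2n−1 choose n]_q − q·[2n−1 choose n−2]_q`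
(the lower index `n−2` is taken in `ℤ`, so the second binomial vanishes
for `n = 1`). -/
theorem qCatalan_eq_qbinom_sub (n : ℕ) (hn : 1 ≤ n) :
    qIntP (n + 1) *
        (qBinomP (2 * n - 1) n - Polynomial.X * qBinomZ (2 * n - 1) ((n : ℤ) - 2)) =
      qBinomP (2 * n) n ∧
    qCatalanP n =
      qBinomP (2 * n - 1) n - Polynomial.X * qBinomZ (2 * n - 1) ((n : ℤ) - 2) := by
  obtain ⟨m, rfl⟩ := Nat.exists_eq_add_of_le' hn
  have main : qIntP (m + 1 + 1) * (qBinomP (2 * (m + 1) - 1) (m + 1) -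
      Polynomial.X * qBinomZ (2 * (m + 1) - 1) (((m + 1 : ℕ) : ℤ) - 2)) =
      qBinomP (2 * (m + 1)) (m + 1) := by
    have hsymm := gaussBinom_add_comm (m + 1) m
    rw [show m + 1 + m = 2 * m + 1 by omega] at hsymm
    rw [show 2 * (m + 1) - 1 = 2 * m + 1 by omega, show 2 * (m + 1) = 2 * m + 2 by omega,
      show ((m + 1 : ℕ) - 2 : ℤ) = (m : ℤ) - 1 by push_cast; ring,
      qBinomP_eq_gaussBinom (by omega), qBinomP_eq_gaussBinom (by omega), hsymm,
      gaussBinom_central_succ, mul_sub, mul_left_comm, qIntP_mul_qBinomZ, ← qIntP_add_two_sub_X_mul]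
    ring
  refine ⟨main, ?_⟩
  rw [qCatalanP, ← main]
  exact mul_divByMonic_cancel_left _ (qIntP_succ_monic _)
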